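/- Fix 0 ≤ q ≤ 1 and g ∈ ℝ, and define the two-outcome statistical model p₁(θ) = (1/2)(1 + √q · sin(θ − g)), p₀(θ) = (1/2)(1 − √q · sin(θ − g)). Then for every θ with q·sin²(θ − g) < 1, the classical Fisher information satisfies (p₀'(θ))²/p₀(θ) + (p₁'(θ))²/p₁(θ) = q·cos²(θ − g)/(1 − q·sin²(θ − g)). In particular it equals q at θ = g (local optimality), and if q = 1 it equals 1 for all θ with cos(θ−g) ≠ 0. -/

import Mathlib

noncomputable section

/-- Outcome probability `p₁(θ) = (1/2)(1 + √q·sin(θ − g))` of the two-outcome model. -/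
def p1 (q g θ : ℝ) : ℝ := 1 / 2 * (1 + Real.sqrt q * Real.sin (θ - g))

/-- Outcome probability `p₀(θ) = (1/2)(1 − √q·sin(θ − g))` of the two-outcome model. -/
def p0 (q g θ : ℝ) : ℝ := 1 / 2 * (1 - Real.sqrt q * Real.sin (θ - g))

/-- The classical Fisher information of the two-outcome model at `θ`. -/
def fisher2 (q g θ : ℝ) : ℝ :=
  (deriv (p0 q g) θ) ^ 2 / p0 q g θ + (deriv (p1 q g) θ) ^ 2 / p1 q g θ

lemma sin_sub_deriv (g θ : ℝ) :
    HasDerivAt (fun θ : ℝ => Real.sin (θ - g)) (Real.cos (θ - g)) θ := by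
  have h1 : HasDerivAt (fun θ : ℝ => θ - g) 1 θ := by
    simpa using (hasDerivAt_id θ).sub_const g
  have h2 := (Real.hasDerivAt_sin (θ - g)).comp θ h1
  rw [mul_one] at h2
  exact h2

lemma deriv_p1 (q g θ : ℝ) :
    deriv (p1 q g) θ = 1 / 2 * (Real.sqrt q * Real.cos (θ - g)) := by
  have h := (((sin_sub_deriv g θ).const_mul (Real.sqrt q)).const_add 1).const_mul (1 / 2 : ℝ)
  exact HasDerivAt.deriv h
lemma deriv_p0 (q g θ : ℝ) :
    deriv (p0 q g) θ = -(1 / 2 * (Real.sqrt q * Real.cos (θ - g))) := by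
  have h := (((sin_sub_deriv g θ).const_mul (Real.sqrt q)).neg.const_add 1).const_mul (1 / 2 : ℝ)
  have heq : p0 q g = fun θ => 1 / 2 * (1 + -(Real.sqrt q * Real.sin (θ - g))) := by
    funext x; simp [p0]; ring
  rw [heq]
  have h' : HasDerivAt (fun θ => 1 / 2 * (1 + -(Real.sqrt q * Real.sin (θ - g))))
      (-(1 / 2 * (Real.sqrt q * Real.cos (θ - g)))) θ := by
    exact h.congr_deriv (by ring)
  exact h'.deriv

/-- for `0 ≤ q ≤ 1`, the classical Fisher information of the two-outcome
model equals `q·cos²(θ−g)/(1 − q·sin²(θ−g))` whenever `q·sin²(θ−g) < 1`; in particular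
it equals `q` at `θ = g`, and if `q = 1` it equals `1` whenever `cos(θ−g) ≠ 0`. -/
theorem fisher_information_two_outcome (q g : ℝ) (hq0 : 0 ≤ q) (hq1 : q ≤ 1) :
    (∀ θ : ℝ, q * Real.sin (θ - g) ^ 2 < 1 →
      fisher2 q g θ = q * Real.cos (θ - g) ^ 2 / (1 - q * Real.sin (θ - g) ^ 2))
    ∧ fisher2 q g g = q
    ∧ (q = 1 → ∀ θ : ℝ, Real.cos (θ - g) ≠ 0 → fisher2 q g θ = 1) := by
  have hsq : Real.sqrt q ^ 2 = q := Real.sq_sqrt hq0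
  have main : ∀ θ : ℝ, q * Real.sin (θ - g) ^ 2 < 1 →
      fisher2 q g θ = q * Real.cos (θ - g) ^ 2 / (1 - q * Real.sin (θ - g) ^ 2) := by
    intro θ hθ
    set s := Real.sin (θ - g) with hs
    set c := Real.cos (θ - g) with hc
    have hs2 : (Real.sqrt q * s) ^ 2 < 1 := by
      rw [mul_pow, hsq]; exact hθ
    set x := Real.sqrt q * s with hx
    have hp0 : 1 / 2 * (1 - x) > 0 := by nlinarith [sq_nonneg (x + 1)]
    have hp1 : 1 / 2 * (1 + x) > 0 := by nlinarith [sq_nonneg (x - 1)]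
    have hden : 1 - q * s ^ 2 > 0 := by linarith
    unfold fisher2
    rw [deriv_p0, deriv_p1]
    show (-(1 / 2 * (Real.sqrt q * c))) ^ 2 / (1 / 2 * (1 - x))
        + (1 / 2 * (Real.sqrt q * c)) ^ 2 / (1 / 2 * (1 + x)) = q * c ^ 2 / (1 - q * s ^ 2)
    have hx2 : x ^ 2 = q * s ^ 2 := by rw [hx, mul_pow, hsq]
    have h0 : (1 - x) ≠ 0 := by nlinarith
    have h1 : (1 + x) ≠ 0 := by nlinarith
    field_simp
    ring_nf
    nlinarith [hsq, hx2, sq_nonneg c, sq_nonneg x]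
  refine ⟨main, ?_, ?_⟩
  · have := main g (by simp)
    simpa using this
  · intro hq θ hc
    have hpyth := Real.sin_sq_add_cos_sq (θ - g)
    have hc2 : Real.cos (θ - g) ^ 2 > 0 := by positivity
    have hs : q * Real.sin (θ - g) ^ 2 < 1 := by nlinarith
    rw [main θ hs, hq, one_mul, one_mul,
      show (1 - Real.sin (θ - g) ^ 2) = Real.cos (θ - g) ^ 2 by linarith,
      div_self (by positivity)]

end
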